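/- Let ρ, c, k, ℓ, γ, q₀ be positive reals, α = k/(ρc), 0 < ε < 1, and ω > 0. Define T(x,t) = -(q₀√(πα)/k)·erf(ω)·[1 - erf(x/(2√(αt)))/erf(ω)], s(t) = 2ω√(αt), ν = ω + (γk/(2q₀√α))·exp(ω²), and r(t) = 2ν√(αt). Then: (i) T satisfies T_t = α T_xx for 0 < x < s(t), t > 0; (ii) T(s(t),t) = 0 for t > 0; (iii) k T_x(0,t) = q₀/√t for t > 0; (iv) T_x(s(t),t)·(r(t) - s(t)) = γ for t > 0; and (v) the Stefan condition k T_x(s(t),t) = ρℓ[ε s'(t) + (1-ε) r'(t)] holds for all t > 0 if and only if ω satisfies [ω + (γ(1-ε)k/(2q₀√α))·exp(ω²)]·exp(ω²) = q₀/(ρℓ√α). -/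

import Mathlib

open Real Filter Set Topology

/-- The error function `erf x = (2/√π) ∫₀ˣ exp(-t²) dt`. -/
noncomputable def erf (x : ℝ) : ℝ := (2 / Real.sqrt π) * ∫ t in (0:ℝ)..x, Real.exp (-t ^ 2)

/-!
`T` is an affine function of `erf η` with `η = x / (2√(αt))`, the self-similar solution of the
heat equation. Its flux is `k T_x = q₀ exp(-η²) / √t`: this is `q₀ / √t` at `x = 0` and
`q₀ exp(-ω²) / √t` on `x = s(t)`, where `η = ω`. Since `s` and `r` are multiples of `√t`, both
interface conditions carry the common factor `1 / √t`; so the width condition holds identically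
and the Stefan condition collapses to a time-independent equation for `ω`.
-/

theorem hasDerivAt_erf (x : ℝ) : HasDerivAt erf (2 / √π * exp (-x ^ 2)) x := by
  have hc : Continuous fun t : ℝ => exp (-t ^ 2) := by fun_prop
  exact (intervalIntegral.integral_hasDerivAt_right (hc.intervalIntegrable _ _)
    (hc.stronglyMeasurableAtFilter _ _) hc.continuousAt).const_mul _

theorem erf_pos {x : ℝ} (hx : 0 < x) : 0 < erf x := by
  have hc : Continuous fun t : ℝ => exp (-t ^ 2) := by fun_prop
  have : 0 < ∫ t in (0:ℝ)..x, exp (-t ^ 2) :=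
    intervalIntegral.intervalIntegral_pos_of_pos_on (hc.intervalIntegrable _ _)
      (fun t _ => exp_pos _) hx
  unfold erf
  positivity

theorem hasDerivAt_erf_div_const (σ x : ℝ) :
    HasDerivAt (fun y => erf (y / σ)) (2 / √π * exp (-(x / σ) ^ 2) / σ) x := by
  have h := (hasDerivAt_erf (x / σ)).comp x ((hasDerivAt_id x).div_const σ)
  exact h.congr_deriv (by simp [div_eq_mul_inv])

theorem hasDerivAt_gaussian_div_const (σ x : ℝ) :
    HasDerivAt (fun y => exp (-(y / σ) ^ 2)) (-2 * x / σ ^ 2 * exp (-(x / σ) ^ 2)) x := by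
  have h := ((hasDerivAt_id x).div_const σ |>.pow 2).neg.exp
  exact h.congr_deriv (by simp; ring)

theorem hasDerivAt_sqrt_mul_const {α t : ℝ} (hαt : 0 < α * t) :
    HasDerivAt (fun τ => √(α * τ)) (α / (2 * √(α * t))) t :=
  ((Real.hasDerivAt_sqrt hαt.ne').comp t ((hasDerivAt_id t).const_mul α)).congr_deriv
    (by simp; ring)

theorem hasDerivAt_two_mul_sqrt_mul {α t : ℝ} (hα : 0 < α) (ht : 0 < t) (c : ℝ) :
    HasDerivAt (fun τ => 2 * c * √(α * τ)) (c * √α / √t) t := by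
  refine ((hasDerivAt_sqrt_mul_const (mul_pos hα ht)).const_mul (2 * c)).congr_deriv ?_
  have : 0 < √α := sqrt_pos.2 hα
  have : 0 < √t := sqrt_pos.2 ht
  rw [sqrt_mul hα.le]
  field_simp
  rw [sq_sqrt hα.le]

theorem hasDerivAt_erf_similarity_time {α t : ℝ} (hαt : 0 < α * t) (x : ℝ) :
    HasDerivAt (fun τ => erf (x / (2 * √(α * τ))))
      (2 / √π * exp (-(x / (2 * √(α * t))) ^ 2) * (-2 * α * x / (2 * √(α * t)) ^ 3)) t := by
  have hσ : 0 < 2 * √(α * t) := by positivity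
  have h := (hasDerivAt_erf _).comp t ((hasDerivAt_const t x).div
    ((hasDerivAt_sqrt_mul_const hαt).const_mul 2) hσ.ne')
  refine h.congr_deriv ?_
  simp only [Pi.div_apply]
  field_simp
  ring

theorem heatEquation_erf_similarity (a b : ℝ) {α t : ℝ} (hα : 0 < α) (ht : 0 < t) (x : ℝ) :
    deriv (fun τ => a + b * erf (x / (2 * √(α * τ)))) t =
      α * deriv (deriv fun y => a + b * erf (y / (2 * √(α * t)))) x := by
  have hdx : deriv (fun y => a + b * erf (y / (2 * √(α * t)))) =
      fun y => b * (2 / √π * exp (-(y / (2 * √(α * t))) ^ 2) / (2 * √(α * t))) :=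
    funext fun y => (((hasDerivAt_erf_div_const _ y).const_mul b).const_add a).deriv
  rw [hdx,
    ((((hasDerivAt_gaussian_div_const _ x).const_mul (2 / √π)).div_const _).const_mul b).deriv,
    (((hasDerivAt_erf_similarity_time (mul_pos hα ht) x).const_mul b).const_add a).deriv]
  ring

theorem heatFlux_erf_similarity (a : ℝ) {k q₀ α t : ℝ} (hk : k ≠ 0) (hα : 0 < α) (ht : 0 < t)
    (x : ℝ) :
    k * deriv (fun y => a + q₀ * √(π * α) / k * erf (y / (2 * √(α * t)))) x =
      q₀ * exp (-(x / (2 * √(α * t))) ^ 2) / √t := by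
  rw [(((hasDerivAt_erf_div_const _ x).const_mul _).const_add a).deriv,
    sqrt_mul pi_pos.le, sqrt_mul hα.le]
  have : 0 < √π := sqrt_pos.2 pi_pos
  have : 0 < √α := sqrt_pos.2 hα
  have : 0 < √t := sqrt_pos.2 ht
  field_simp

theorem stefanCondition_iff {ρ ℓ k γ q₀ α ε ω ν t : ℝ} (hρ : 0 < ρ) (hℓ : 0 < ℓ) (hα : 0 < α)
    (ht : 0 < t) (hν : ν = ω + γ * k / (2 * q₀ * √α) * exp (ω ^ 2)) :
    q₀ * exp (-ω ^ 2) / √t = ρ * ℓ * (ε * (ω * √α / √t) + (1 - ε) * (ν * √α / √t)) ↔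
      (ω + γ * (1 - ε) * k / (2 * q₀ * √α) * exp (ω ^ 2)) * exp (ω ^ 2) =
        q₀ / (ρ * ℓ * √α) := by
  have : 0 < √α := sqrt_pos.2 hα
  have : 0 < √t := sqrt_pos.2 ht
  have hm : -(ρ * ℓ * √α / (exp (ω ^ 2) * √t)) ≠ 0 := neg_ne_zero.2 (by positivity)
  have key : q₀ * exp (-ω ^ 2) / √t - ρ * ℓ * (ε * (ω * √α / √t) + (1 - ε) * (ν * √α / √t)) =
      -(ρ * ℓ * √α / (exp (ω ^ 2) * √t)) *
        ((ω + γ * (1 - ε) * k / (2 * q₀ * √α) * exp (ω ^ 2)) * exp (ω ^ 2) -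
          q₀ / (ρ * ℓ * √α)) := by
    rw [hν, exp_neg]
    field_simp
    ring
  rw [← sub_eq_zero, key, mul_eq_zero, or_iff_right hm, sub_eq_zero]

theorem gradient_mul_mushyWidth {k γ q₀ α ω ν t : ℝ} (hk : k ≠ 0) (hq : q₀ ≠ 0) (hα : 0 < α)
    (ht : 0 < t) (hν : ν = ω + γ * k / (2 * q₀ * √α) * exp (ω ^ 2)) :
    q₀ * exp (-ω ^ 2) / √t / k * (2 * ν * √(α * t) - 2 * ω * √(α * t)) = γ := by
  have : 0 < √α := sqrt_pos.2 hα
  have : 0 < √t := sqrt_pos.2 ht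
  rw [hν, sqrt_mul hα.le, exp_neg]
  field_simp
  ring

theorem stmt_17_general (ρ c k ℓ γ q₀ α ε ω ν : ℝ)
    (hρ : 0 < ρ) (hc : 0 < c) (hk : 0 < k) (hℓ : 0 < ℓ) (hq : 0 < q₀)
    (hα : α = k / (ρ * c)) (hω : 0 < ω)
    (T : ℝ → ℝ → ℝ) (s r : ℝ → ℝ)
    (hT : ∀ x t, T x t = -(q₀ * Real.sqrt (π * α) / k) * erf ω *
      (1 - erf (x / (2 * Real.sqrt (α * t))) / erf ω))
    (hs : ∀ t, s t = 2 * ω * Real.sqrt (α * t))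
    (hν : ν = ω + (γ * k / (2 * q₀ * Real.sqrt α)) * Real.exp (ω ^ 2))
    (hr : ∀ t, r t = 2 * ν * Real.sqrt (α * t)) :
    (∀ t > (0:ℝ), ∀ x, 0 < x → x < s t →
      deriv (fun τ => T x τ) t = α * deriv (deriv (fun y => T y t)) x) ∧
    (∀ t > (0:ℝ), T (s t) t = 0) ∧
    (∀ t > (0:ℝ), k * deriv (fun y => T y t) 0 = q₀ / Real.sqrt t) ∧
    (∀ t > (0:ℝ), deriv (fun y => T y t) (s t) * (r t - s t) = γ) ∧
    ((∀ t > (0:ℝ), k * deriv (fun y => T y t) (s t) =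
        ρ * ℓ * (ε * deriv s t + (1 - ε) * deriv r t)) ↔
      (ω + (γ * (1 - ε) * k / (2 * q₀ * Real.sqrt α)) * Real.exp (ω ^ 2)) *
        Real.exp (ω ^ 2) = q₀ / (ρ * ℓ * Real.sqrt α)) := by
  have hα0 : 0 < α := hα ▸ by positivity
  have hT' : T = fun x t => -(q₀ * √(π * α) / k * erf ω) +
      q₀ * √(π * α) / k * erf (x / (2 * √(α * t))) := by
    have := (erf_pos hω).ne'
    funext x t
    rw [hT]
    field_simp
    ring
  have hs_arg (t : ℝ) (ht : 0 < t) : s t / (2 * √(α * t)) = ω := by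
    have : 0 < √(α * t) := sqrt_pos.2 (mul_pos hα0 ht)
    rw [hs]
    field_simp
  have hflux (t : ℝ) (ht : 0 < t) (x : ℝ) :
      k * deriv (fun y => T y t) x = q₀ * exp (-(x / (2 * √(α * t))) ^ 2) / √t := by
    rw [hT']
    exact heatFlux_erf_similarity _ hk.ne' hα0 ht x
  have hflux_s (t : ℝ) (ht : 0 < t) :
      k * deriv (fun y => T y t) (s t) = q₀ * exp (-ω ^ 2) / √t := by
    rw [hflux t ht, hs_arg t ht]
  have hstefan (t : ℝ) (ht : 0 < t) :
      k * deriv (fun y => T y t) (s t) = ρ * ℓ * (ε * deriv s t + (1 - ε) * deriv r t) ↔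
      (ω + γ * (1 - ε) * k / (2 * q₀ * √α) * exp (ω ^ 2)) * exp (ω ^ 2) = q₀ / (ρ * ℓ * √α) := by
    rw [hflux_s t ht, funext hs, funext hr, (hasDerivAt_two_mul_sqrt_mul hα0 ht ω).deriv,
      (hasDerivAt_two_mul_sqrt_mul hα0 ht ν).deriv]
    exact stefanCondition_iff hρ hℓ hα0 ht hν
  refine ⟨fun t ht x _ _ => ?_, fun t ht => ?_, fun t ht => by simpa using hflux t ht 0,
    fun t ht => ?_,
    ⟨fun h => (hstefan 1 one_pos).1 (h 1 one_pos), fun h t ht => (hstefan t ht).2 h⟩⟩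
  · rw [hT']
    exact heatEquation_erf_similarity _ _ hα0 ht x
  · simp [hT', hs_arg t ht]
  · rw [eq_div_of_mul_eq hk.ne' ((mul_comm _ _).trans (hflux_s t ht)), hr, hs]
    exact gradient_mul_mushyWidth hk.ne' hq.ne' hα0 ht hν

/-- The explicit candidate solution for the heat-flux mushy-zone problem: heat equation,
vanishing on the solid–mushy interface, heat-flux boundary condition, mushy-zone width
condition, and the Stefan condition iff `ω` solves the transcendental equation. -/
theorem stmt_17 (ρ c k ℓ γ q₀ α ε ω ν : ℝ)
    (hρ : 0 < ρ) (hc : 0 < c) (hk : 0 < k) (hℓ : 0 < ℓ) (hγ : 0 < γ) (hq : 0 < q₀)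
    (hα : α = k / (ρ * c)) (hε0 : 0 < ε) (hε1 : ε < 1) (hω : 0 < ω)
    (T : ℝ → ℝ → ℝ) (s r : ℝ → ℝ)
    (hT : ∀ x t, T x t = -(q₀ * Real.sqrt (π * α) / k) * erf ω *
      (1 - erf (x / (2 * Real.sqrt (α * t))) / erf ω))
    (hs : ∀ t, s t = 2 * ω * Real.sqrt (α * t))
    (hν : ν = ω + (γ * k / (2 * q₀ * Real.sqrt α)) * Real.exp (ω ^ 2))
    (hr : ∀ t, r t = 2 * ν * Real.sqrt (α * t)) :
    (∀ t > (0:ℝ), ∀ x, 0 < x → x < s t →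
      deriv (fun τ => T x τ) t = α * deriv (deriv (fun y => T y t)) x) ∧
    (∀ t > (0:ℝ), T (s t) t = 0) ∧
    (∀ t > (0:ℝ), k * deriv (fun y => T y t) 0 = q₀ / Real.sqrt t) ∧
    (∀ t > (0:ℝ), deriv (fun y => T y t) (s t) * (r t - s t) = γ) ∧
    ((∀ t > (0:ℝ), k * deriv (fun y => T y t) (s t) =
        ρ * ℓ * (ε * deriv s t + (1 - ε) * deriv r t)) ↔
      (ω + (γ * (1 - ε) * k / (2 * q₀ * Real.sqrt α)) * Real.exp (ω ^ 2)) *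
        Real.exp (ω ^ 2) = q₀ / (ρ * ℓ * Real.sqrt α)) :=
  stmt_17_general ρ c k ℓ γ q₀ α ε ω ν hρ hc hk hℓ hq hα hω T s r hT hs hν hr
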